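/- arXiv:1210.2101 — 8 statements merged into one kernel-verified Lean document; each statement's English description precedes it below -/
import Mathlib

section
/- Let G be a torsion-free group and K a normal subgroup of G such that the center of K is trivial and the quotient G/K is finite. Then the extension 1 → K → G → G/K → 1 is effective: for every g ∈ G, if there exists k₀ ∈ K with g·x·g⁻¹ = k₀·x·k₀⁻¹ for all x ∈ K, then g ∈ K. -/
/-!
If conjugation by `g` agrees on `K` with conjugation by `k₀ ∈ K`, then `c = k₀⁻¹ * g`
centralizes `K`. Since `K` has finite index, some power `cⁿ` with `n > 0` lies in `K`; it
still centralizes `K`, so it is central in `K` and hence trivial. Thus `c` has finite order,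
and torsion-freeness forces `c = 1`, i.e. `g = k₀ ∈ K`.
-/

namespace Subgroup

variable {G : Type*} [Group G] {K : Subgroup G}

theorem inv_mul_mem_centralizer_of_conj_eq {g k : G}
    (h : ∀ x ∈ K, g * x * g⁻¹ = k * x * k⁻¹) : k⁻¹ * g ∈ centralizer (K : Set G) := by
  refine mem_centralizer_iff.2 fun x hx => ?_
  have hx' := congrArg (fun y => k⁻¹ * y * g) (h x hx)
  simp only [mul_assoc, inv_mul_cancel, inv_mul_cancel_left, mul_one] at hx'
  simp only [mul_assoc, ← hx']

theorem isOfFinOrder_of_mem_centralizer [Finite (G ⧸ K)]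
    (hZ : ∀ k ∈ K, (∀ x ∈ K, k * x = x * k) → k = 1) {c : G}
    (hc : c ∈ centralizer (K : Set G)) : IsOfFinOrder c := by
  obtain ⟨n, hn, -, hcn⟩ := K.exists_pow_mem_of_index_ne_zero K.index_ne_zero_of_finite c
  refine isOfFinOrder_iff_pow_eq_one.2 ⟨n, hn, hZ _ hcn fun x hx => ?_⟩
  exact ((Commute.pow_right (mem_centralizer_iff.1 hc x hx) n).symm).eq

end Subgroup

theorem effective_of_torsionFree_centerless_finiteQuotient_general (G : Type*) [Group G]
    (hG : ∀ g : G, g ≠ 1 → ¬IsOfFinOrder g) (K : Subgroup G)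
    (hZ : ∀ k ∈ K, (∀ x ∈ K, k * x = x * k) → k = 1)
    (hfin : Finite (G ⧸ K)) (g : G)
    (h : ∃ k₀ ∈ K, ∀ x ∈ K, g * x * g⁻¹ = k₀ * x * k₀⁻¹) : g ∈ K := by
  obtain ⟨k₀, hk₀, hconj⟩ := h
  have hc : k₀⁻¹ * g = 1 := by
    by_contra hne
    exact hG _ hne (Subgroup.isOfFinOrder_of_mem_centralizer hZ
      (Subgroup.inv_mul_mem_centralizer_of_conj_eq hconj))
  exact inv_mul_eq_one.1 hc ▸ hk₀

/-- If `G` is torsion-free, `K ⊴ G` has trivial center and `G/K` is finite, then the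
extension `1 → K → G → G/K → 1` is effective. -/
theorem effective_of_torsionFree_centerless_finiteQuotient (G : Type*) [Group G]
    (hG : ∀ g : G, g ≠ 1 → ¬IsOfFinOrder g) (K : Subgroup G) [K.Normal]
    (hZ : ∀ k ∈ K, (∀ x ∈ K, k * x = x * k) → k = 1)
    (hfin : Finite (G ⧸ K)) (g : G)
    (h : ∃ k₀ ∈ K, ∀ x ∈ K, g * x * g⁻¹ = k₀ * x * k₀⁻¹) : g ∈ K :=
  effective_of_torsionFree_centerless_finiteQuotient_general G hG K hZ hfin g h
end

section
/- Let 1 → A → G → Q → 1 be a central extension, i.e. A is a subgroup of the center of G (hence normal) and Q = G/A. If G is finitely generated and Q is finitely presented, then A is finitely generated. -/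
/-!
Lift the presentation map `π : F → G/A` to `φ : F → G`. Since `π` is onto, `G = A · φ(F)`, and
`A ∩ φ(F) = φ(ker π)` is the image of the normal closure of the finite set of relators `S`.
As `φ(S)` lies in `A`, hence in the centre, this image is the subgroup generated by `φ(S)`.
Finally, a central subgroup `A` with `G = A · H` is finitely generated as soon as `G` and
`A ∩ H` are: write each generator `t` of `G` as `aₜ hₜ`; the `aₜ` together with generators of
`A ∩ H` generate a central, hence normal, subgroup `M ≤ A` with `G = M · H`, so every `a ∈ A` is
`m h` with `h = m⁻¹ a ∈ A ∩ H ≤ M`.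
-/

namespace Subgroup

variable {G : Type*} [Group G]

theorem normal_of_le_center {H : Subgroup G} (h : H ≤ center G) : H.Normal :=
  ⟨fun a ha g => by rwa [mem_center_iff.1 (h ha) g, mul_inv_cancel_right]⟩

theorem normalClosure_eq_closure_of_subset_center {s : Set G} (hs : s ⊆ center G) :
    normalClosure s = closure s := by
  have := normal_of_le_center ((closure_le _).2 hs)
  rw [← normalClosure_closure_eq_normalClosure, normalClosure_eq_self]

theorem map_normalClosure_of_image_subset_center {N : Type*} [Group N] (f : G →* N) {s : Set G}
    (hs : f '' s ⊆ center N) : (normalClosure s).map f = closure (f '' s) :=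
  le_antisymm ((map_normalClosure_le s f).trans (normalClosure_eq_closure_of_subset_center hs).le)
    ((closure_le _).2 <| by rw [coe_map]; exact Set.image_mono subset_normalClosure)

theorem fg_of_le_center_of_sup_eq_top [Group.FG G] {A H : Subgroup G} (hA : A ≤ center G)
    (hAH : A ⊔ H = ⊤) (hfg : (A ⊓ H).FG) : A.FG := by
  have := normal_of_le_center hA
  obtain ⟨T, hT⟩ := Group.fg_def.1 ‹Group.FG G›
  choose a ha k hk hak using fun g : G => mem_sup_of_normal_left.1 (hAH ▸ mem_top g)
  set M := A ⊓ H ⊔ closure (a '' T)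
  have hMA : M ≤ A :=
    sup_le inf_le_left ((closure_le A).2 (Set.image_subset_iff.2 fun t _ => ha t))
  have := normal_of_le_center (hMA.trans hA)
  have hMH : M ⊔ H = ⊤ := by
    rw [eq_top_iff, ← hT, closure_le]
    intro t ht
    rw [← hak t]
    exact mul_mem_sup (mem_sup_right (subset_closure (Set.mem_image_of_mem a ht))) (hk t)
  have hAM : A ≤ M := by
    intro x hx
    obtain ⟨m, hm, h, hh, rfl⟩ := mem_sup_of_normal_left.1 (hMH ▸ mem_top x)
    have hhA : h ∈ A := by simpa using A.mul_mem (A.inv_mem (hMA hm)) hx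
    exact M.mul_mem hm (mem_sup_left ⟨hhA, hh⟩)
  rw [le_antisymm hAM hMA]
  exact hfg.sup ((fg_iff _).2 ⟨_, rfl, T.finite_toSet.image a⟩)

end Subgroup

theorem FreeGroup.exists_comp_eq_of_surjective {α G Q : Type*} [Group G] [Group Q]
    {p : G →* Q} (hp : Function.Surjective p) (π : FreeGroup α →* Q) :
    ∃ φ : FreeGroup α →* G, p.comp φ = π :=
  ⟨FreeGroup.lift fun i => Function.surjInv hp (π (of i)),
    FreeGroup.ext_hom _ _ fun i => by simp [Function.surjInv_eq hp]⟩

theorem MonoidHom.ker_sup_range_eq_top_of_comp_surjective {F G Q : Type*} [Group F] [Group G]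
    [Group Q] (p : G →* Q) (φ : F →* G) (h : Function.Surjective (p.comp φ)) :
    p.ker ⊔ φ.range = ⊤ := by
  refine eq_top_iff.2 fun g _ => ?_
  obtain ⟨f, hf⟩ := h (p g)
  have hker : g * (φ f)⁻¹ ∈ p.ker := by
    rw [MonoidHom.mem_ker, map_mul, map_inv, ← MonoidHom.comp_apply, hf, mul_inv_cancel]
  simpa using Subgroup.mul_mem_sup hker (φ.mem_range.2 ⟨f, rfl⟩)

/-- In a central extension `1 → A → G → Q → 1`, if `G` is finitely generated and
`Q = G/A` is finitely presented, then `A` is finitely generated. -/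
theorem centralSubgroup_fg_of_fg_of_quotient_fp (G : Type*) [Group G] (A : Subgroup G)
    [A.Normal] (hA : A ≤ Subgroup.center G) (hG : Group.FG G)
    (hQ : ∃ (n : ℕ) (π : FreeGroup (Fin n) →* G ⧸ A), Function.Surjective π ∧
      ∃ S : Finset (FreeGroup (Fin n)),
        π.ker = Subgroup.normalClosure (S : Set (FreeGroup (Fin n)))) :
    Group.FG A := by
  obtain ⟨n, π, hπ, S, hS⟩ := hQ
  obtain ⟨φ, rfl⟩ := FreeGroup.exists_comp_eq_of_surjective (QuotientGroup.mk'_surjective A) π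
  have hsup : A ⊔ φ.range = ⊤ := by
    simpa using (QuotientGroup.mk' A).ker_sup_range_eq_top_of_comp_surjective φ hπ
  have hSA : φ '' S ⊆ A := by
    rintro _ ⟨s, hs, rfl⟩
    have : s ∈ ((QuotientGroup.mk' A).comp φ).ker := hS ▸ Subgroup.subset_normalClosure hs
    simpa using this
  have hinf : A ⊓ φ.range = Subgroup.closure (φ '' S) := by
    rw [inf_comm, ← Subgroup.map_comap_eq, ← QuotientGroup.ker_mk' A, MonoidHom.comap_ker, hS,
      Subgroup.map_normalClosure_of_image_subset_center φ (hSA.trans hA)]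
  rw [Group.fg_iff_subgroup_fg]
  exact Subgroup.fg_of_le_center_of_sup_eq_top hA hsup
    (hinf ▸ (Subgroup.fg_iff _).2 ⟨_, rfl, S.finite_toSet.image φ⟩)
end

section
/- (Selberg's Lemma) Let A be a finitely generated integral domain of characteristic zero, i.e. a commutative ring that is a domain, has characteristic zero, and is finitely generated as a ℤ-algebra. Then for every n, the group GL_n(A) of invertible n×n matrices over A has a torsion-free subgroup of finite index. -/
/-!
Reduction modulo a maximal ideal `m` maps `GL_n(A)` to `GL_n(A ⧸ m)`, which is finite because
`ℤ` is a Jacobson ring, so by Zariski's lemma the residue fields of a finitely generated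
`ℤ`-algebra are finite. Its kernel contains no element of prime order `r` with `r ∉ m`: if
`M ≡ 1 mod m` and `M ^ r = 1`, then `(1 + M + ⋯ + M ^ (r - 1)) * (M - 1) = 0`, and the first
factor has determinant `≡ r ^ n mod m`, hence nonzero. Since `A` is a Jacobson domain of
characteristic zero, there are two maximal ideals of different residue characteristics, and
the intersection of the two kernels is torsion-free.
-/

/-- The definition of `Monoid.IsTorsionFree` in Mathlib of December 2024 (since removed). -/
def Monoid.IsTorsionFree (G : Type*) [Monoid G] : Prop :=
  ∀ g : G, g ≠ 1 → ¬IsOfFinOrder g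

theorem Monoid.isTorsionFree_of_forall_pow_prime_eq_one {G : Type*} [Group G]
    (h : ∀ g : G, ∀ p : ℕ, p.Prime → g ^ p = 1 → g = 1) : Monoid.IsTorsionFree G := by
  intro g hg hfin
  have hg₁ : orderOf g ≠ 1 := mt orderOf_eq_one_iff.1 hg
  have hp := Nat.minFac_prime hg₁
  set y := g ^ (orderOf g / (orderOf g).minFac)
  have hy : orderOf y = (orderOf g).minFac :=
    orderOf_pow_orderOf_div hfin.orderOf_pos.ne' (Nat.minFac_dvd _)
  have hy₁ : y = 1 := h y _ hp (hy ▸ pow_orderOf_eq_one y)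
  exact hp.ne_one (by rw [← hy, hy₁, orderOf_one])

instance Int.instIsJacobsonRing : IsJacobsonRing ℤ := by
  rw [isJacobsonRing_iff_prime_eq]
  intro P hP
  rcases eq_or_ne P ⊥ with rfl | hP0
  · refine le_antisymm (fun x hx => ?_) Ideal.le_jacobson
    have h₁ := Ideal.mem_jacobson_bot.1 hx 1
    have h₂ := Ideal.mem_jacobson_bot.1 hx 2
    rw [Int.isUnit_iff] at h₁ h₂
    rw [Ideal.mem_bot]
    omega
  · have := IsPrime.to_maximal_ideal hP0
    exact Ideal.jacobson_eq_self_of_isMaximal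

theorem Field.finite_of_moduleFinite_int (K : Type*) [Field K] [Module.Finite ℤ K] :
    Finite K := by
  obtain ⟨a, ha, ha0⟩ : ∃ a : ℤ, algebraMap ℤ K a = 0 ∧ a ≠ 0 := by
    by_contra! h
    exact Int.not_isField <| isField_of_isIntegral_of_isField
      ((injective_iff_map_eq_zero _).2 h) (Field.toIsField K)
  refine Module.finite_of_fg_torsion K fun x => ⟨⟨a, mem_nonZeroDivisors_of_ne_zero ha0⟩, ?_⟩
  simp_all [zsmul_eq_mul]

namespace Ideal

variable {A : Type*} [CommRing A]

theorem finite_quotient_of_finiteType_int [Algebra.FiniteType ℤ A] (m : Ideal A) [m.IsMaximal] :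
    Finite (A ⧸ m) := by
  let := Quotient.field m
  have := finite_of_finite_type_of_isJacobsonRing ℤ (A ⧸ m)
  exact Field.finite_of_moduleFinite_int (A ⧸ m)

theorem exists_prime_natCast_mem_of_finite_quotient (m : Ideal A) [m.IsMaximal]
    [Finite (A ⧸ m)] : ∃ p : ℕ, p.Prime ∧ (p : A) ∈ m := by
  let := Quotient.field m
  obtain ⟨p, _⟩ := CharP.exists (A ⧸ m)
  have : NeZero p := ⟨CharP.char_ne_zero_of_finite (R := A ⧸ m) p⟩
  refine ⟨p, (CharP.char_is_prime_of_pos (A ⧸ m) p).out, Quotient.eq_zero_iff_mem.1 ?_⟩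
  simp

theorem eq_of_prime_natCast_mem {I : Ideal A} (hI : I ≠ ⊤) {p q : ℕ} (hp : p.Prime)
    (hq : q.Prime) (hpI : (p : A) ∈ I) (hqI : (q : A) ∈ I) : p = q := by
  have := Quotient.nontrivial_iff.2 hI
  rw [← CharP.ringChar_of_prime_eq_zero hp (by simpa using Quotient.eq_zero_iff_mem.2 hpI),
    CharP.ringChar_of_prime_eq_zero hq (by simpa using Quotient.eq_zero_iff_mem.2 hqI)]

theorem exists_isMaximal_notMem_of_ne_zero [IsDomain A] [IsJacobsonRing A] {a : A}
    (ha : a ≠ 0) : ∃ m : Ideal A, m.IsMaximal ∧ a ∉ m := by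
  by_contra! h
  have : a ∈ (⊥ : Ideal A).jacobson := mem_sInf.2 fun m hm => h m hm.2
  rw [← radical_eq_jacobson, radical_bot_of_isReduced] at this
  exact ha (mem_bot.1 this)

theorem exists_isMaximal_isMaximal_forall_prime_natCast_notMem [IsDomain A] [CharZero A]
    [Algebra.FiniteType ℤ A] : ∃ m₁ m₂ : Ideal A, m₁.IsMaximal ∧ m₂.IsMaximal ∧
      ∀ q : ℕ, q.Prime → (q : A) ∉ m₁ ∨ (q : A) ∉ m₂ := by
  have := isJacobsonRing_of_finiteType (A := ℤ) (B := A)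
  obtain ⟨m₁, hm₁⟩ := exists_maximal A
  have := finite_quotient_of_finiteType_int m₁
  obtain ⟨p, hp, hpm₁⟩ := m₁.exists_prime_natCast_mem_of_finite_quotient
  obtain ⟨m₂, hm₂, hpm₂⟩ := exists_isMaximal_notMem_of_ne_zero (a := (p : A)) (mod_cast hp.ne_zero)
  refine ⟨m₁, m₂, hm₁, hm₂, fun q hq => or_iff_not_imp_left.2 fun hqm₁ => ?_⟩
  rwa [← eq_of_prime_natCast_mem hm₁.ne_top hp hq hpm₁ (not_not.1 hqm₁)]

end Ideal

theorem Matrix.eq_one_of_pow_eq_one_of_map_eq_one {n A : Type*} [Fintype n] [DecidableEq n]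
    [CommRing A] [IsDomain A] {I : Ideal A} [I.IsPrime] {r : ℕ} (hr : (r : A) ∉ I)
    {M : Matrix n n A} (hM : M.map (Ideal.Quotient.mk I) = 1) (hMr : M ^ r = 1) : M = 1 := by
  set S := ∑ i ∈ Finset.range r, M ^ i
  have hS : S * (M - 1) = 0 := by rw [geom_sum_mul, hMr, sub_self]
  have hSI : S.map (Ideal.Quotient.mk I) = r := by
    have hM' : (Ideal.Quotient.mk I).mapMatrix M = 1 := hM
    change (Ideal.Quotient.mk I).mapMatrix S = _
    simp [S, map_sum, map_pow, hM']
  have hdet : S.det ≠ 0 := by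
    intro h
    have : Ideal.Quotient.mk I S.det = (r : A ⧸ I) ^ Fintype.card n := by
      simp [RingHom.map_det, hSI, ← Matrix.diagonal_natCast, Matrix.det_diagonal]
    have hr' : (r : A ⧸ I) ≠ 0 := by
      rwa [← map_natCast (Ideal.Quotient.mk I), Ne, Ideal.Quotient.eq_zero_iff_mem]
    rw [h, map_zero] at this
    exact pow_ne_zero _ hr' this.symm
  have hSM : S.det • (M - 1) = 0 := by
    rw [← smul_one_mul, ← Matrix.adjugate_mul, mul_assoc, hS, mul_zero]
  exact sub_eq_zero.1 ((smul_eq_zero.1 hSM).resolve_left hdet)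

namespace Matrix.GeneralLinearGroup

variable (n : Type*) [Fintype n] [DecidableEq n] {A : Type*} [CommRing A]

def congruenceSubgroup (I : Ideal A) : Subgroup (GL n A) :=
  (map (Ideal.Quotient.mk I)).ker

instance (I : Ideal A) [Finite (A ⧸ I)] : (congruenceSubgroup n I).FiniteIndex :=
  Subgroup.finiteIndex_ker _

variable {n}

theorem eq_one_of_mem_congruenceSubgroup_of_pow_eq_one [IsDomain A] {I : Ideal A} [I.IsPrime]
    {r : ℕ} (hr : (r : A) ∉ I) {g : GL n A} (hg : g ∈ congruenceSubgroup n I)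
    (hgr : g ^ r = 1) : g = 1 :=
  Units.ext <| eq_one_of_pow_eq_one_of_map_eq_one hr (Units.ext_iff.1 hg)
    (by simpa using Units.ext_iff.1 hgr)

end Matrix.GeneralLinearGroup

/-- Selberg's Lemma: if `A` is a finitely generated integral domain of characteristic
zero, then `GL_n(A)` has a torsion-free subgroup of finite index. -/
theorem selberg_lemma (A : Type*) [CommRing A] [IsDomain A] [CharZero A]
    (hfg : Algebra.FiniteType ℤ A) (n : ℕ) :
    ∃ H : Subgroup (Matrix.GeneralLinearGroup (Fin n) A),
      H.FiniteIndex ∧ Monoid.IsTorsionFree H := by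
  obtain ⟨m₁, m₂, _, _, hm⟩ := Ideal.exists_isMaximal_isMaximal_forall_prime_natCast_notMem (A := A)
  have := Ideal.finite_quotient_of_finiteType_int m₁
  have := Ideal.finite_quotient_of_finiteType_int m₂
  let Γ (m : Ideal A) := Matrix.GeneralLinearGroup.congruenceSubgroup (Fin n) m
  refine ⟨Γ m₁ ⊓ Γ m₂, inferInstance, Monoid.isTorsionFree_of_forall_pow_prime_eq_one ?_⟩
  rintro ⟨g, hg₁, hg₂⟩ p hp hgp
  have hgp : g ^ p = 1 := congrArg Subtype.val hgp
  ext1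
  rcases hm p hp with hpm | hpm
  · exact Matrix.GeneralLinearGroup.eq_one_of_mem_congruenceSubgroup_of_pow_eq_one hpm hg₁ hgp
  · exact Matrix.GeneralLinearGroup.eq_one_of_mem_congruenceSubgroup_of_pow_eq_one hpm hg₂ hgp
end

section
/- Let k be a field of characteristic zero in which the only elements integral over ℤ are the images of integers (i.e. for every x ∈ k, if x is integral over ℤ then x lies in the image of ℤ in k). If α ∈ GL_n(k) has finite order, then the trace of α is (the image of) an integer m with |m| ≤ n, and m = n if and only if α is the identity matrix. -/
/-!
The eigenvalues of `α` (in an algebraic closure of `k`) are `N`-th roots of unity, where `N` is the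
order of `α`, so the characteristic polynomial divides `(X ^ N - 1) ^ n`. Its coefficients are
therefore integral over `ℤ`, hence integers by the hypothesis on `k`: the characteristic polynomial
is the image of a monic `q ∈ ℤ[X]` dividing `(X ^ N - 1) ^ n`. The complex roots of `q` lie on the
unit circle and sum to the trace `m`, so `|m| ≤ n`, and `m = n` forces every root to be `1`. Then
`α - 1` is nilpotent, while `α` is semisimple because `X ^ N - 1` is separable in characteristic
zero; hence `α = 1`.
-/

open Polynomial

namespace Complex

theorem norm_multiset_sum_le_card {s : Multiset ℂ} (hs : ∀ z ∈ s, ‖z‖ ≤ 1) :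
    ‖s.sum‖ ≤ Multiset.card s :=
  calc ‖s.sum‖ ≤ (s.map (‖·‖)).sum := norm_multiset_sum_le s
    _ ≤ Multiset.card (s.map (‖·‖)) • 1 := Multiset.sum_le_card_nsmul _ _ (by simpa using hs)
    _ = Multiset.card s := by simp

theorem eq_one_of_re_eq_one_of_norm_le_one {z : ℂ} (hre : z.re = 1) (hz : ‖z‖ ≤ 1) : z = 1 :=
  ext hre (abs_re_eq_norm.mp (le_antisymm (abs_re_le_norm z) (by rwa [hre, abs_one])))

theorem eq_one_of_multiset_sum_eq_card {s : Multiset ℂ} (hs : ∀ z ∈ s, ‖z‖ ≤ 1)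
    (hsum : s.sum = Multiset.card s) : ∀ z ∈ s, z = 1 := by
  have hdefect : ∀ x ∈ s.map (fun z => 1 - z.re), x = 0 := by
    refine Multiset.all_zero_of_le_zero_le_of_sum_eq_zero ?_ ?_
    · simp only [Multiset.mem_map, forall_exists_index, and_imp, forall_apply_eq_imp_iff₂,
        sub_nonneg]
      exact fun z hz => (re_le_norm z).trans (hs z hz)
    · have hre : (s.map re).sum = Multiset.card s := by
        simpa [map_multiset_sum] using congrArg reAddGroupHom hsum
      simp [Multiset.sum_map_sub, hre]
  intro z hz
  refine eq_one_of_re_eq_one_of_norm_le_one ?_ (hs z hz)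
  linarith [hdefect _ (Multiset.mem_map_of_mem _ hz)]

end Complex

namespace Polynomial

theorem Splits.dvd_pow_natDegree {R : Type*} [CommRing R] [IsDomain R] {p f : R[X]}
    (hp : p.Splits) (hm : p.Monic) (hf : ∀ a ∈ p.roots, f.IsRoot a) : p ∣ f ^ p.natDegree :=
  calc p = (p.roots.map fun a => X - C a).prod := hp.eq_prod_roots_of_monic hm
    _ ∣ (p.roots.map fun _ => f).prod :=
      Multiset.prod_dvd_prod_of_dvd _ _ fun a ha => dvd_iff_isRoot.mpr (hf a ha)
    _ = f ^ p.natDegree := by simp [splits_iff_card_roots.mp hp]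

section UnitDisk

variable {p : ℂ[X]}

theorem Monic.norm_nextCoeff_le_natDegree (hp : p.Monic) (hroots : ∀ z ∈ p.roots, ‖z‖ ≤ 1) :
    ‖p.nextCoeff‖ ≤ p.natDegree := by
  have hs := IsAlgClosed.splits p
  rw [hs.nextCoeff_eq_neg_sum_roots_of_monic hp, norm_neg, ← splits_iff_card_roots.mp hs]
  exact Complex.norm_multiset_sum_le_card hroots

theorem Monic.eq_X_sub_one_pow_of_nextCoeff_eq (hp : p.Monic) (hroots : ∀ z ∈ p.roots, ‖z‖ ≤ 1)
    (hnext : p.nextCoeff = -p.natDegree) : p = (X - 1) ^ p.natDegree := by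
  have hs := IsAlgClosed.splits p
  have hcard := splits_iff_card_roots.mp hs
  have hsum : p.roots.sum = Multiset.card p.roots := by
    rw [hcard, ← neg_neg p.roots.sum, ← hs.nextCoeff_eq_neg_sum_roots_of_monic hp, hnext, neg_neg]
  have hone : p.roots = Multiset.replicate p.natDegree 1 :=
    Multiset.eq_replicate.mpr ⟨hcard, Complex.eq_one_of_multiset_sum_eq_card hroots hsum⟩
  calc p = (p.roots.map fun a => X - C a).prod := hs.eq_prod_roots_of_monic hp
    _ = (X - 1) ^ p.natDegree := by simp [hone]

theorem norm_eq_one_of_mem_roots_of_dvd {N d : ℕ} (hN : N ≠ 0) (hp : p ∣ (X ^ N - 1) ^ d)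
    {z : ℂ} (hz : z ∈ p.roots) : ‖z‖ = 1 := by
  have hroot : ((X ^ N - 1) ^ d : ℂ[X]).IsRoot z := (isRoot_of_mem_roots hz).dvd hp
  simp only [IsRoot, eval_pow, eval_sub, eval_X, eval_one] at hroot
  exact Complex.norm_eq_one_of_pow_eq_one (sub_eq_zero.mp (eq_zero_of_pow_eq_zero hroot)) hN

end UnitDisk

section RootsOfUnity

variable {q : ℤ[X]} {N d : ℕ}

theorem norm_le_one_of_mem_roots_map_of_dvd (hN : N ≠ 0) (hdvd : q ∣ (X ^ N - 1) ^ d) :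
    ∀ z ∈ (q.map (Int.castRingHom ℂ)).roots, ‖z‖ ≤ 1 := fun _ hz =>
  (norm_eq_one_of_mem_roots_of_dvd hN (by simpa using map_dvd (Int.castRingHom ℂ) hdvd) hz).le

theorem Monic.abs_nextCoeff_le_natDegree_of_dvd (hq : q.Monic) (hN : N ≠ 0)
    (hdvd : q ∣ (X ^ N - 1) ^ d) : |q.nextCoeff| ≤ q.natDegree := by
  have := (hq.map (Int.castRingHom ℂ)).norm_nextCoeff_le_natDegree
    (norm_le_one_of_mem_roots_map_of_dvd hN hdvd)
  rw [nextCoeff_map (f := Int.castRingHom ℂ) Int.cast_injective, eq_intCast, Complex.norm_intCast,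
    hq.natDegree_map] at this
  exact_mod_cast this

theorem Monic.eq_X_sub_one_pow_of_dvd_of_nextCoeff_eq (hq : q.Monic) (hN : N ≠ 0)
    (hdvd : q ∣ (X ^ N - 1) ^ d) (hnext : q.nextCoeff = -q.natDegree) :
    q = (X - 1) ^ q.natDegree := by
  have := (hq.map (Int.castRingHom ℂ)).eq_X_sub_one_pow_of_nextCoeff_eq
    (norm_le_one_of_mem_roots_map_of_dvd hN hdvd)
    (by simp [nextCoeff_map (f := Int.castRingHom ℂ) Int.cast_injective, hq.natDegree_map, hnext])
  apply map_injective (Int.castRingHom ℂ) Int.cast_injective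
  simpa [hq.natDegree_map] using this

end RootsOfUnity

theorem exists_monic_lift_of_dvd_map {k : Type*} [Field k] [CharZero k]
    (hk : ∀ x : k, IsIntegral ℤ x → ∃ m : ℤ, x = (m : k)) {p : k[X]} {g : ℤ[X]}
    (hp : p.Monic) (hg : g.Monic) (hpg : p ∣ g.map (Int.castRingHom k)) :
    ∃ q : ℤ[X], q.Monic ∧ q.map (Int.castRingHom k) = p ∧ q ∣ g := by
  have hlift : p ∈ lifts (Int.castRingHom k) := by
    refine lifts_iff_coeff_lifts p |>.mpr fun i => ?_
    obtain ⟨m, hm⟩ := hk _ (isIntegral_coeff_of_dvd g p hg hp (by simpa using hpg) i)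
    exact ⟨m, by simp [hm]⟩
  obtain ⟨q, hqp, -, hq⟩ := lifts_and_degree_eq_and_monic hlift hp
  refine ⟨q, hq, hqp, ?_⟩
  rwa [← map_dvd_map (Int.castRingHom k) Int.cast_injective hq, hqp]

end Polynomial

theorem spectrum.isRoot_of_aeval_eq_zero {R A : Type*} [Field R] [Ring A] [Algebra R A] {a : A}
    {f : R[X]} (hf : aeval a f = 0) {r : R} (hr : r ∈ spectrum R a) : f.IsRoot r := by
  have h0 := spectrum.subset_polynomial_aeval a f ⟨r, hr, rfl⟩
  rw [hf, spectrum.mem_iff, sub_zero] at h0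
  by_contra h
  exact h0 ((isUnit_iff_ne_zero.mpr h).map (algebraMap R A))

theorem Matrix.charpoly_dvd_pow_of_aeval_eq_zero {n K : Type*} [Fintype n] [DecidableEq n]
    [Field K] {A : Matrix n n K} {f : K[X]} (hf : aeval A f = 0) :
    A.charpoly ∣ f ^ Fintype.card n := by
  let L := AlgebraicClosure K
  have hf' : aeval (A.map (algebraMap K L)) (f.map (algebraMap K L)) = 0 := by
    rw [aeval_map_algebraMap]
    change aeval ((Algebra.ofId K L).mapMatrix A) f = 0
    rw [aeval_algHom_apply, hf, map_zero]
  rw [← map_dvd_map' (algebraMap K L), Polynomial.map_pow, ← A.charpoly_natDegree_eq_dim,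
    ← A.charpoly_monic.natDegree_map (algebraMap K L), ← Matrix.charpoly_map]
  exact (IsAlgClosed.splits _).dvd_pow_natDegree (A.map _).charpoly_monic fun μ hμ =>
    spectrum.isRoot_of_aeval_eq_zero hf'
      (mem_spectrum_iff_isRoot_charpoly.mpr (isRoot_of_mem_roots hμ))

theorem eq_one_of_pow_eq_one_of_sub_one_pow_eq_zero {K B : Type*} [Field K] [CharZero K] [Ring B]
    [Algebra K B] {b : B} {N d : ℕ} (hN : N ≠ 0) (hbN : b ^ N = 1) (hbd : (b - 1) ^ d = 0) :
    b = 1 := by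
  have hsep : (minpoly K b).Separable :=
    (separable_X_pow_sub_C 1 (Nat.cast_ne_zero.mpr hN) one_ne_zero).of_dvd
      (minpoly.dvd K b (by simp [hbN]))
  have hdvd : minpoly K b ∣ (X - C 1) ^ d := minpoly.dvd K b (by simp [hbd])
  simpa [sub_eq_zero] using minpoly.dvd_iff.mp (hsep.squarefree.isRadical d _ hdvd)

/-- If `k` is a characteristic-zero field in which the only elements integral over `ℤ`
are the integers, then any finite-order element `α` of `GL_n(k)` has trace an integer
`m` with `|m| ≤ n`, with equality `m = n` iff `α` is the identity. -/
theorem trace_of_finiteOrder (k : Type*) [Field k] [CharZero k]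
    (hk : ∀ x : k, IsIntegral ℤ x → ∃ m : ℤ, x = (m : k))
    (n : ℕ) (α : Matrix.GeneralLinearGroup (Fin n) k) (hα : IsOfFinOrder α) :
    ∃ m : ℤ, Matrix.trace (α : Matrix (Fin n) (Fin n) k) = (m : k) ∧
      |m| ≤ (n : ℤ) ∧ (m = (n : ℤ) ↔ α = 1) := by
  set A := (α : Matrix (Fin n) (Fin n) k)
  set N := orderOf α
  have hN : N ≠ 0 := hα.orderOf_pos.ne'
  have hAN : A ^ N = 1 := by rw [← Units.val_pow_eq_pow_val, pow_orderOf_eq_one, Units.val_one]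
  have hdvd : A.charpoly ∣ ((X ^ N - 1) ^ n : ℤ[X]).map (Int.castRingHom k) := by
    simpa using A.charpoly_dvd_pow_of_aeval_eq_zero (f := X ^ N - 1) (by simp [hAN])
  obtain ⟨q, hq, hqA, hqdvd⟩ :=
    exists_monic_lift_of_dvd_map hk A.charpoly_monic ((monic_X_pow_sub_C 1 hN).pow n) hdvd
  have hdeg : q.natDegree = n := by
    rw [← hq.natDegree_map (Int.castRingHom k), hqA, A.charpoly_natDegree_eq_dim, Fintype.card_fin]
  have htrace : A.trace = ((-q.nextCoeff : ℤ) : k) := by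
    rw [A.trace_eq_neg_charpoly_nextCoeff, ← hqA, nextCoeff_map Int.cast_injective]
    simp
  refine ⟨-q.nextCoeff, htrace, by simpa [hdeg] using hq.abs_nextCoeff_le_natDegree_of_dvd hN hqdvd,
    fun hm => ?_, fun h1 => ?_⟩
  · have hqX : q = (X - 1) ^ n := by
      simpa [hdeg] using hq.eq_X_sub_one_pow_of_dvd_of_nextCoeff_eq hN hqdvd (by omega)
    have hunip : (A - 1) ^ n = 0 := by
      simpa [← hqA, hqX] using A.aeval_self_charpoly
    exact Units.ext (eq_one_of_pow_eq_one_of_sub_one_pow_eq_zero (K := k) hN hAN hunip)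
  · have : ((-q.nextCoeff : ℤ) : k) = (n : ℤ) := by
      rw [← htrace, show A = 1 from congrArg Units.val h1]
      simp
    exact_mod_cast this
end

section
/- Let G be a subgroup of the isometry group of Euclidean space E^k = ℝ^k whose natural action on E^k is properly discontinuous and cocompact. Let A be the subgroup of G consisting of pure translations (isometries of the form x ↦ x + v for some vector v), and suppose A has finite index in G. Let B be any subgroup of A of finite index in A. Then the centralizer of B in G is exactly A. -/
/-!
Being of finite index in the cocompact group `G`, the translation subgroup `B` is itself
cocompact, so its translation vectors lie within bounded distance of every point and hence span
`E^k`. An isometry commuting with all of `B` has (by Mazur–Ulam) a linear part fixing this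
spanning set, so it is a translation.
-/

open Metric Set Submodule

/-- Take `C' := ⋃ t⁻¹ '' C` over representatives `t` of the finitely many cosets of `B` in `G`. -/
theorem IsometryEquiv.exists_isCompact_iUnion_image_eq_univ_of_relIndex_ne_zero
    {X : Type*} [PseudoEMetricSpace X] {G B : Subgroup (X ≃ᵢ X)} (hB : B.relIndex G ≠ 0)
    {C : Set X} (hC : IsCompact C) (hcov : ⋃ g ∈ G, g '' C = univ) :
    ∃ C' : Set X, IsCompact C' ∧ ⋃ b ∈ B, b '' C' = univ := by
  have : Finite (G ⧸ B.subgroupOf G) := (Nat.card_ne_zero.mp hB).2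
  refine ⟨⋃ q : G ⧸ B.subgroupOf G, ((q.out⁻¹ : G) : X ≃ᵢ X) '' C,
    isCompact_iUnion fun q => hC.image (IsometryEquiv.continuous _), eq_univ_of_forall fun x => ?_⟩
  obtain ⟨g, hg, c, hc, rfl⟩ := mem_iUnion₂.mp (hcov ▸ mem_univ x)
  set q : G ⧸ B.subgroupOf G := QuotientGroup.mk (⟨g, hg⟩ : G)⁻¹
  obtain ⟨h, hh⟩ := QuotientGroup.mk_out_eq_mul (B.subgroupOf G) (⟨g, hg⟩ : G)⁻¹
  have hgt : g * (q.out : X ≃ᵢ X) = h := by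
    rw [hh]; simp
  refine mem_iUnion₂.mpr ⟨g * q.out, hgt ▸ Subgroup.mem_subgroupOf.mp h.2, ?_⟩
  exact ⟨_, mem_iUnion.mpr ⟨q, c, hc, rfl⟩, by simp⟩

/-- A nonzero `u ⊥ span V` would put `((R + 1) / ‖u‖) • u` at distance more than `R` from `V`. -/
theorem Submodule.span_eq_top_of_forall_exists_norm_sub_le {E : Type*} [NormedAddCommGroup E]
    [InnerProductSpace ℝ E] [FiniteDimensional ℝ E] {V : Set E} (R : ℝ)
    (hV : ∀ x, ∃ v ∈ V, ‖x - v‖ ≤ R) : span ℝ V = ⊤ := by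
  by_contra hne
  obtain ⟨u, hu, hu0⟩ := (span ℝ V)ᗮ.ne_bot_iff.mp (mt orthogonal_eq_bot_iff.mp hne)
  have hu_pos : 0 < ‖u‖ := norm_pos_iff.mpr hu0
  obtain ⟨v, hv, hvR⟩ := hV (((R + 1) / ‖u‖) • u)
  have hinner : inner ℝ (((R + 1) / ‖u‖) • u - v) u = (R + 1) * ‖u‖ := by
    rw [inner_sub_left, real_inner_smul_left, inner_right_of_mem_orthogonal (subset_span hv) hu,
      real_inner_self_eq_norm_sq]
    field_simp
    ring
  have := (le_abs_self _).trans (abs_real_inner_le_norm (((R + 1) / ‖u‖) • u - v) u)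
  rw [hinner] at this
  nlinarith [mul_le_mul_of_nonneg_right hvR hu_pos.le]

/-- By Mazur–Ulam, `x ↦ g x - g 0` is linear; it fixes the spanning set `V`. -/
theorem IsometryEquiv.apply_eq_add_apply_zero_of_commute_translations {E : Type*}
    [NormedAddCommGroup E] [NormedSpace ℝ E] (g : E ≃ᵢ E) {V : Set E} (hV : span ℝ V = ⊤)
    (hg : ∀ v ∈ V, ∀ x, g (x + v) = g x + v) (x : E) : g x = x + g 0 := by
  have hlin : (g.toRealLinearIsometryEquiv : E →ₗ[ℝ] E) = LinearMap.id :=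
    LinearMap.ext_on hV fun v hv => by
      simpa [toRealLinearIsometryEquiv_apply, sub_eq_iff_eq_add'] using hg v hv 0
  exact eq_add_of_sub_eq (by simpa [toRealLinearIsometryEquiv_apply] using congr($hlin x))

theorem centralizer_eq_translations_general (k : ℕ)
    (G A B : Subgroup (EuclideanSpace ℝ (Fin k) ≃ᵢ EuclideanSpace ℝ (Fin k)))
    (hcc : ∃ C : Set (EuclideanSpace ℝ (Fin k)), IsCompact C ∧
      ⋃ g ∈ G, (g : EuclideanSpace ℝ (Fin k) ≃ᵢ EuclideanSpace ℝ (Fin k)) '' C = Set.univ)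
    (hA : ∀ g : EuclideanSpace ℝ (Fin k) ≃ᵢ EuclideanSpace ℝ (Fin k),
      g ∈ A ↔ g ∈ G ∧ ∃ v : EuclideanSpace ℝ (Fin k), ∀ x, g x = x + v)
    (hAG : A ≤ G) (hBA : B ≤ A)
    (hAfin : A.relIndex G ≠ 0) (hBfin : B.relIndex A ≠ 0) :
    Subgroup.centralizer (B : Set (EuclideanSpace ℝ (Fin k) ≃ᵢ EuclideanSpace ℝ (Fin k))) ⊓ G = A := by
  obtain ⟨C, hC, hcov⟩ := hcc
  have hBG : B.relIndex G ≠ 0 := by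
    rw [← Subgroup.relIndex_mul_relIndex B A G hBA hAG]
    exact mul_ne_zero hBfin hAfin
  obtain ⟨C', hC', hcov'⟩ :=
    IsometryEquiv.exists_isCompact_iUnion_image_eq_univ_of_relIndex_ne_zero hBG hC hcov
  obtain ⟨R, hR⟩ := hC'.isBounded.subset_closedBall 0
  set V := {v | ∃ b ∈ B, ∀ x, b x = x + v}
  have hV : span ℝ V = ⊤ := span_eq_top_of_forall_exists_norm_sub_le R fun x => by
    obtain ⟨b, hb, c, hc, rfl⟩ := mem_iUnion₂.mp (hcov' ▸ mem_univ x)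
    obtain ⟨-, v, hv⟩ := (hA b).mp (hBA hb)
    exact ⟨v, ⟨b, hb, hv⟩, by simpa [hv] using hR hc⟩
  apply le_antisymm
  · rintro g ⟨hgc, hgG⟩
    refine (hA g).mpr ⟨hgG, g 0, g.apply_eq_add_apply_zero_of_commute_translations hV ?_⟩
    rintro v ⟨b, hb, hbv⟩ x
    simpa [hbv] using congr($(Subgroup.mem_centralizer_iff.mp hgc b hb) x).symm
  · intro a ha
    refine ⟨Subgroup.mem_centralizer_iff.mpr fun b hb => ?_, hAG ha⟩
    obtain ⟨-, w, hw⟩ := (hA a).mp ha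
    obtain ⟨-, v, hv⟩ := (hA b).mp (hBA hb)
    ext x
    simp [hv, hw, add_right_comm]

/-- Let `G` be a group of isometries of Euclidean `k`-space acting properly
discontinuously and cocompactly, `A ≤ G` the subgroup of pure translations in `G`
(assumed of finite index in `G`), and `B ≤ A` of finite index in `A`.  Then the
centralizer of `B` in `G` is exactly `A`. -/
theorem centralizer_eq_translations (k : ℕ)
    (G A B : Subgroup (EuclideanSpace ℝ (Fin k) ≃ᵢ EuclideanSpace ℝ (Fin k)))
    (hpd : ∀ K L : Set (EuclideanSpace ℝ (Fin k)), IsCompact K → IsCompact L →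
      {g : EuclideanSpace ℝ (Fin k) ≃ᵢ EuclideanSpace ℝ (Fin k) |
        g ∈ G ∧ ((g : EuclideanSpace ℝ (Fin k) ≃ᵢ EuclideanSpace ℝ (Fin k)) '' K ∩ L).Nonempty}.Finite)
    (hcc : ∃ C : Set (EuclideanSpace ℝ (Fin k)), IsCompact C ∧
      ⋃ g ∈ G, (g : EuclideanSpace ℝ (Fin k) ≃ᵢ EuclideanSpace ℝ (Fin k)) '' C = Set.univ)
    (hA : ∀ g : EuclideanSpace ℝ (Fin k) ≃ᵢ EuclideanSpace ℝ (Fin k),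
      g ∈ A ↔ g ∈ G ∧ ∃ v : EuclideanSpace ℝ (Fin k), ∀ x, g x = x + v)
    (hAG : A ≤ G) (hBA : B ≤ A)
    (hAfin : A.relIndex G ≠ 0) (hBfin : B.relIndex A ≠ 0) :
    Subgroup.centralizer (B : Set (EuclideanSpace ℝ (Fin k) ≃ᵢ EuclideanSpace ℝ (Fin k))) ⊓ G = A :=
  centralizer_eq_translations_general k G A B hcc hA hAG hBA hAfin hBfin
end

section
/- Let G be a torsion-free group with a subgroup of finite index isomorphic to ℤ^m. Then there is an injective homomorphism φ from G to the isometry group of Euclidean space E^m = ℝ^m such that the induced action of G on E^m is free (no nontrivial g ∈ G fixes a point of E^m), properly discontinuous (for all compact K, L ⊆ E^m the set {g ∈ G : φ(g)(K) ∩ L ≠ ∅} is finite), and cocompact (there is a compact C ⊆ E^m with ⋃_{g ∈ G} φ(g)(C) = E^m). -/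
/-!
Pass to the normal core `N` of the given subgroup; it is again free abelian of rank `m`. Identifying
`N` with the lattice `ℤ^m` spanned by a basis of `ℝ^m`, conjugation in `G` extends to a linear
representation `ρ` of `G` that is trivial on `N`, hence factors through the finite group `G ⧸ N`.
Averaging the norm over `G ⧸ N` makes `ρ` orthogonal after a change of basis, and averaging over
coset representatives extends the inclusion `N → ℝ^m` to a cocycle `τ` for `ρ` on all of `G`. Then
`g ↦ (x ↦ ρ g x + τ g)` is an action by isometries in which `N` acts by translations along a
lattice. That action of `N` is free, properly discontinuous and cocompact, and these properties
pass to `G` because `N` has finite index and `G` is torsion-free.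
-/

open Function Module Set Submodule Pointwise

theorem Subgroup.nonempty_mulEquiv_of_finiteIndex {P ι : Type*} [Group P] [Finite ι]
    (e : P ≃* Multiplicative (ι → ℤ)) (K : Subgroup P) [K.FiniteIndex] :
    Nonempty (K ≃* Multiplicative (ι → ℤ)) := by
  let e' := e.trans (MulEquiv.funMultiplicative ι ℤ)
  obtain ⟨f⟩ := Int.subgroup_index_ne_zero_iff.mp <|
    (K.index_map_equiv e').symm ▸ FiniteIndex.index_ne_zero
  exact ⟨((e'.subgroupMap K).trans f).trans (MulEquiv.funMultiplicative ι ℤ).symm⟩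

theorem Subgroup.exists_normal_finiteIndex_mulEquiv {G ι : Type*} [Group G] [Finite ι]
    (H : Subgroup G) [H.FiniteIndex] (e : H ≃* Multiplicative (ι → ℤ)) :
    ∃ N : Subgroup G, N.Normal ∧ N.FiniteIndex ∧ Nonempty (N ≃* Multiplicative (ι → ℤ)) :=
  ⟨H.normalCore, H.normalCore_normal, inferInstance,
    (nonempty_mulEquiv_of_finiteIndex e (H.normalCore.subgroupOf H)).map
      ((subgroupOfEquivOfLe H.normalCore_le).symm.trans)⟩

section Lattice

variable {K ι E F : Type*} [CommRing K] [Fintype ι] [AddCommGroup E] [Module K E]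
  [AddCommGroup F] [Module K F]

namespace Module.Basis

noncomputable def intExtend [DecidableEq ι] (b : Basis ι K E) (f : (ι → ℤ) →+ F) : E →ₗ[K] F :=
  b.constr K fun i => f (Pi.single i 1)

@[simp]
theorem intExtend_linearCombination [DecidableEq ι] (b : Basis ι K E) (f : (ι → ℤ) →+ F)
    (v : ι → ℤ) : b.intExtend f (Fintype.linearCombination ℤ b v) = f v := by
  have hv : ∑ i, v i • Pi.single i 1 = v := by
    simp_rw [← Pi.single_smul', smul_eq_mul, mul_one, Finset.univ_sum_single]
  calc b.intExtend f (Fintype.linearCombination ℤ b v) = ∑ i, v i • f (Pi.single i 1) := by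
        simp [intExtend, Fintype.linearCombination_apply]
    _ = f (∑ i, v i • Pi.single i 1) := by simp only [map_sum, map_zsmul]
    _ = f v := by rw [hv]

theorem ext_linearCombination_int (b : Basis ι K E) {L L' : E →ₗ[K] F}
    (h : ∀ v, L (Fintype.linearCombination ℤ b v) = L' (Fintype.linearCombination ℤ b v)) :
    L = L' := by
  classical
  refine b.ext fun i => ?_
  simpa [Fintype.linearCombination_apply, Pi.single_apply] using h (Pi.single i 1)

end Module.Basis

section ConjRepresentation

variable {G : Type*} [Group G] {N : Subgroup G} (ℓ : Additive N ≃+ (ι → ℤ))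
  (b : Basis ι K E)

noncomputable def latticeEmbedding : Additive N →+ E :=
  (Fintype.linearCombination ℤ b).toAddMonoidHom.comp ℓ.toAddMonoidHom

theorem latticeEmbedding_apply (n : Additive N) :
    latticeEmbedding ℓ b n = Fintype.linearCombination ℤ b (ℓ n) := rfl

theorem range_latticeEmbedding : range (latticeEmbedding ℓ b) = span ℤ (range b) := by
  rw [← Fintype.range_linearCombination, LinearMap.coe_range, latticeEmbedding,
    AddMonoidHom.coe_comp]
  exact ℓ.surjective.range_comp _

theorem injective_latticeEmbedding [CharZero K] : Injective (latticeEmbedding ℓ b) :=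
  (linearIndependent_iff_injective_fintypeLinearCombination.1
    (b.linearIndependent.restrict_scalars' ℤ)).comp ℓ.injective

theorem latticeEmbedding_map (T : E ≃ₗ[K] F) (n : Additive N) :
    latticeEmbedding ℓ (b.map T) n = T (latticeEmbedding ℓ b n) := by
  simp [latticeEmbedding_apply, Fintype.linearCombination_apply, map_sum, map_zsmul]

theorem ext_latticeEmbedding {L L' : E →ₗ[K] F}
    (h : ∀ n : N, L (latticeEmbedding ℓ b (.ofMul n)) = L' (latticeEmbedding ℓ b (.ofMul n))) :
    L = L' :=
  b.ext_linearCombination_int fun v => by simpa [latticeEmbedding_apply] using h (ℓ.symm v).toMul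

variable [N.Normal] [DecidableEq ι]

noncomputable def conjRepresentation : Representation K G E where
  toFun g := b.intExtend <| (latticeEmbedding ℓ b).comp <|
    (MulAut.conjNormal g).toMonoidHom.toAdditive.comp ℓ.symm.toAddMonoidHom
  map_one' := b.ext_linearCombination_int fun v => by simp [latticeEmbedding_apply]
  map_mul' g h := b.ext_linearCombination_int fun v => by simp [latticeEmbedding_apply]

theorem conjRepresentation_latticeEmbedding (g : G) (n : N) :
    conjRepresentation ℓ b g (latticeEmbedding ℓ b (.ofMul n)) =
      latticeEmbedding ℓ b (.ofMul (MulAut.conjNormal g n)) := by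
  simp [conjRepresentation, latticeEmbedding_apply]

theorem conjRepresentation_of_mem (n : N) : conjRepresentation ℓ b n = 1 := by
  refine ext_latticeEmbedding ℓ b fun m => ?_
  have hcomm : n * m = m * n := Additive.ofMul.injective <| ℓ.injective <| by
    simp only [ofMul_mul, map_add, add_comm]
  have hconj : MulAut.conjNormal (n : G) m = m := by
    ext
    rw [MulAut.conjNormal_apply, ← Subgroup.coe_mul, hcomm, Subgroup.coe_mul, mul_inv_cancel_right]
  rw [conjRepresentation_latticeEmbedding, hconj, Module.End.one_apply]

theorem conjRepresentation_map (T : E ≃ₗ[K] F) (g : G) :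
    conjRepresentation ℓ (b.map T) g = T.conj (conjRepresentation ℓ b g) :=
  ext_latticeEmbedding ℓ (b.map T) fun n => by
    rw [conjRepresentation_latticeEmbedding, latticeEmbedding_map, latticeEmbedding_map]
    simp [LinearEquiv.conj_apply, conjRepresentation_latticeEmbedding]

end ConjRepresentation

end Lattice

theorem Representation.exists_linearEquiv_norm_map {𝕜 Q E : Type*} [RCLike 𝕜] [Group Q]
    [Finite Q] [NormedAddCommGroup E] [InnerProductSpace 𝕜 E] [FiniteDimensional 𝕜 E]
    (ρ : Representation 𝕜 Q E) : ∃ T : E ≃ₗ[𝕜] E, ∀ q x, ‖T (ρ q x)‖ = ‖T x‖ := by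
  have := Fintype.ofFinite Q
  let J : E →ₗ[𝕜] PiLp 2 (fun _ : Q => E) :=
    (WithLp.linearEquiv 2 𝕜 (Q → E)).symm.toLinearMap ∘ₗ LinearMap.pi fun q => ρ q
  have hJ (x : E) : ‖J x‖ ^ 2 = ∑ q, ‖ρ q x‖ ^ 2 := PiLp.norm_sq_eq_of_L2 _ _
  have hJρ (q : Q) (x : E) : ‖J (ρ q x)‖ = ‖J x‖ := by
    rw [← sq_eq_sq₀ (norm_nonneg _) (norm_nonneg _), hJ, hJ]
    simp only [← Module.End.mul_apply, ← map_mul]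
    exact Fintype.sum_equiv (Equiv.mulRight q) _ _ fun _ => rfl
  have hJle (x : E) : ‖x‖ ^ 2 ≤ ‖J x‖ ^ 2 :=
    calc ‖x‖ ^ 2 = ‖ρ 1 x‖ ^ 2 := by simp
      _ ≤ ∑ q, ‖ρ q x‖ ^ 2 :=
        Finset.single_le_sum (f := fun q => ‖ρ q x‖ ^ 2) (fun _ _ => by positivity)
          (Finset.mem_univ 1)
      _ = ‖J x‖ ^ 2 := (hJ x).symm
  have hJinj : Injective J :=
    (injective_iff_map_eq_zero J).2 fun x hx => by simpa [hx] using hJle x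
  have hrank : finrank 𝕜 (LinearMap.range J) = finrank 𝕜 E := LinearMap.finrank_range_of_inj hJinj
  let S := (stdOrthonormalBasis 𝕜 (LinearMap.range J)).equiv (stdOrthonormalBasis 𝕜 E)
    (finCongr hrank)
  refine ⟨(LinearEquiv.ofInjective J hJinj).trans S.toLinearEquiv, fun q x => ?_⟩
  simp [S.norm_map, hJρ]

namespace Subgroup

variable {G : Type*} [Group G] (N : Subgroup G) [N.Normal]

noncomputable def outDefect (g : G) (q : G ⧸ N) : N :=
  ⟨g * q.out * ((g : G ⧸ N) * q).out⁻¹, by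
    rw [← div_eq_mul_inv, ← QuotientGroup.eq_iff_div_mem]
    simp⟩

theorem outDefect_mul (g h : G) (q : G ⧸ N) :
    N.outDefect (g * h) q = MulAut.conjNormal g (N.outDefect h q) * N.outDefect g (h * q) := by
  ext
  simp [outDefect, MulAut.conjNormal_apply, mul_assoc]

theorem outDefect_of_mem (n : N) (q : G ⧸ N) : N.outDefect n q = n := by
  ext
  simp [outDefect, (QuotientGroup.eq_one_iff (n : G)).mpr n.2]

end Subgroup

theorem Representation.exists_cocycle_extension {k G V : Type*} [Field k] [CharZero k] [Group G]
    [AddCommGroup V] [Module k V] (ρ : Representation k G V) {N : Subgroup G} [N.Normal]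
    [N.FiniteIndex] (t : Additive N →+ V)
    (ht : ∀ g (n : N), t (.ofMul (MulAut.conjNormal g n)) = ρ g (t (.ofMul n))) :
    ∃ τ : G → V, (∀ g h, τ (g * h) = τ g + ρ g (τ h)) ∧ ∀ n : N, τ n = t (.ofMul n) := by
  have := Fintype.ofFinite (G ⧸ N)
  have hc : (Fintype.card (G ⧸ N) : k) ≠ 0 := Nat.cast_ne_zero.2 Fintype.card_ne_zero
  refine ⟨fun g => (Fintype.card (G ⧸ N) : k)⁻¹ • ∑ q, t (.ofMul (N.outDefect g q)), ?_, ?_⟩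
  · intro g h
    have hsum : ∑ q, t (.ofMul (N.outDefect g (h * q))) = ∑ q, t (.ofMul (N.outDefect g q)) :=
      Fintype.sum_equiv (Equiv.mulLeft (h : G ⧸ N)) _ _ fun _ => rfl
    simp only [N.outDefect_mul, ofMul_mul, map_add, ht, Finset.sum_add_distrib, hsum, map_smul,
      map_sum, smul_add]
    abel
  · intro n
    simp [N.outDefect_of_mem, ← Nat.cast_smul_eq_nsmul k, smul_smul, hc]

theorem Representation.exists_isometryEquiv_hom {k G E : Type*} [CommSemiring k] [Group G]
    [SeminormedAddCommGroup E] [Module k E] (ρ : Representation k G E)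
    (hρ : ∀ g x, ‖ρ g x‖ = ‖x‖) (τ : G → E) (hτ : ∀ g h, τ (g * h) = τ g + ρ g (τ h)) :
    ∃ φ : G →* (E ≃ᵢ E), ∀ g x, φ g x = ρ g x + τ g := by
  have hτ1 : τ 1 = 0 := by simpa using hτ 1 1
  have hmul (g h : G) (x : E) : ρ (g * h) x + τ (g * h) = ρ g (ρ h x + τ h) + τ g := by
    rw [hτ, map_mul, Module.End.mul_apply, map_add]; abel
  have hinv (g : G) (x : E) : ρ g⁻¹ (ρ g x + τ g) + τ g⁻¹ = x := by
    rw [← hmul, inv_mul_cancel, map_one, hτ1, Module.End.one_apply, add_zero]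
  let ψ (g : G) : E ≃ᵢ E :=
    { toFun x := ρ g x + τ g
      invFun x := ρ g⁻¹ x + τ g⁻¹
      left_inv := hinv g
      right_inv x := by simpa using hinv g⁻¹ x
      isometry_toFun := Isometry.of_dist_eq fun x y => by
        simp [dist_eq_norm, ← map_sub, hρ] }
  exact ⟨{ toFun := ψ
           map_one' := IsometryEquiv.ext fun x => by simp [ψ, hτ1]
           map_mul' g h := IsometryEquiv.ext fun x => hmul g h x }, fun _ _ => rfl⟩

theorem exists_isometryEquiv_hom_translating_lattice {G ι E : Type*} [Group G] [Fintype ι]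
    [DecidableEq ι] [NormedAddCommGroup E] [InnerProductSpace ℝ E] [FiniteDimensional ℝ E]
    {N : Subgroup G} [N.Normal] [N.FiniteIndex] (ℓ : Additive N ≃+ (ι → ℤ)) (b₀ : Basis ι ℝ E) :
    ∃ (φ : G →* (E ≃ᵢ E)) (b : Basis ι ℝ E),
      ∀ (n : N) x, φ n x = x + latticeEmbedding ℓ b (.ofMul n) := by
  obtain ⟨T, hT⟩ := Representation.exists_linearEquiv_norm_map <|
    QuotientGroup.lift N (conjRepresentation ℓ b₀) fun n hn =>
      conjRepresentation_of_mem ℓ b₀ ⟨n, hn⟩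
  let b := b₀.map T
  have hρ (g : G) (x : E) : ‖conjRepresentation ℓ b g x‖ = ‖x‖ := by
    have : ‖T (conjRepresentation ℓ b₀ g (T.symm x))‖ = ‖T (T.symm x)‖ := hT g (T.symm x)
    simpa [b, conjRepresentation_map, LinearEquiv.conj_apply] using this
  obtain ⟨τ, hτ, hτN⟩ := (conjRepresentation ℓ b).exists_cocycle_extension (latticeEmbedding ℓ b)
    fun g n => (conjRepresentation_latticeEmbedding ℓ b g n).symm
  obtain ⟨φ, hφ⟩ := (conjRepresentation ℓ b).exists_isometryEquiv_hom hρ τ hτ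
  exact ⟨φ, b, fun n x => by rw [hφ, conjRepresentation_of_mem, hτN, Module.End.one_apply]⟩

section FiniteIndex

variable {G X : Type*} [Group G] [PseudoEMetricSpace X] (φ : G →* (X ≃ᵢ X)) {N : Subgroup G}
  [N.FiniteIndex]

theorem MonoidHom.eq_one_of_apply_eq_self_of_finiteIndex
    (hG : ∀ g : G, g ≠ 1 → ¬IsOfFinOrder g) (hN : ∀ n ∈ N, ∀ x, φ n x = x → n = 1)
    (g : G) (x : X) (hx : φ g x = x) : g = 1 := by
  obtain ⟨k, hk, -, hgk⟩ := N.exists_pow_mem_of_index_ne_zero Subgroup.FiniteIndex.index_ne_zero g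
  have hpow (j : ℕ) : φ (g ^ j) x = x := by
    induction j with
    | zero => simp
    | succ j ih => rw [pow_succ, map_mul, IsometryEquiv.mul_apply, hx, ih]
  by_contra hg
  exact hG g hg (isOfFinOrder_iff_pow_eq_one.2 ⟨k, hk, hN _ hgk x (hpow k)⟩)

theorem MonoidHom.finite_setOf_image_inter_nonempty_of_finiteIndex
    (hN : ∀ K L : Set X, IsCompact K → IsCompact L → {n | n ∈ N ∧ (φ n '' K ∩ L).Nonempty}.Finite)
    {K L : Set X} (hK : IsCompact K) (hL : IsCompact L) :
    {g | (φ g '' K ∩ L).Nonempty}.Finite := by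
  refine (finite_iUnion fun q : G ⧸ N =>
    (hN K (φ q.out⁻¹ '' L) hK (hL.image (φ _).continuous)).image (q.out * ·)).subset ?_
  rintro g ⟨_, ⟨x, hxK, rfl⟩, hxL⟩
  refine mem_iUnion.2 ⟨g, (g : G ⧸ N).out⁻¹ * g,
    ⟨QuotientGroup.eq.1 (QuotientGroup.out_eq' _), φ _ x, mem_image_of_mem _ hxK, ?_⟩,
    mul_inv_cancel_left _ _⟩
  rw [map_mul, IsometryEquiv.mul_apply]
  exact mem_image_of_mem _ hxL

end FiniteIndex

section Translation

variable {G E ι : Type*} [Group G] [NormedAddCommGroup E] {φ : G →* (E ≃ᵢ E)} {N : Subgroup G}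
  {t : Additive N →+ E}

theorem eq_one_of_apply_eq_self_of_translation (ht : Injective t)
    (hφ : ∀ (n : N) x, φ n x = x + t (.ofMul n)) (g : G) (hg : g ∈ N) (x : E) (hx : φ g x = x) :
    g = 1 := by
  have : t (.ofMul ⟨g, hg⟩) = 0 := by simpa [hφ ⟨g, hg⟩] using hx
  exact congrArg Subtype.val (Additive.ofMul.injective (ht (this.trans t.map_zero.symm)))

theorem finite_setOf_mem_image_inter_nonempty_of_translation [NormedSpace ℝ E]
    [FiniteDimensional ℝ E] [Finite ι] (b : Basis ι ℝ E) (ht : Injective t)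
    (htb : range t ⊆ span ℤ (range b))
    (hφ : ∀ (n : N) x, φ n x = x + t (.ofMul n)) {K L : Set E} (hK : IsCompact K)
    (hL : IsCompact L) : {g | g ∈ N ∧ (φ g '' K ∩ L).Nonempty}.Finite := by
  have hfin := ZSpan.setFinite_inter b (isBounded_sub hL.isBounded hK.isBounded)
  refine ((hfin.preimage (ht.comp Additive.ofMul.injective).injOn).image Subtype.val).subset ?_
  rintro g ⟨hg, _, ⟨x, hxK, rfl⟩, hxL⟩
  refine ⟨⟨g, hg⟩, ⟨?_, htb (mem_range_self _)⟩, rfl⟩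
  have := hφ ⟨g, hg⟩ x
  exact ⟨_, hxL, x, hxK, by simp [this]⟩

theorem exists_isCompact_iUnion_image_eq_univ_of_translation [NormedSpace ℝ E]
    [FiniteDimensional ℝ E] [Fintype ι] (b : Basis ι ℝ E)
    (hbt : (span ℤ (range b) : Set E) ⊆ range t)
    (hφ : ∀ (n : N) x, φ n x = x + t (.ofMul n)) :
    ∃ C : Set E, IsCompact C ∧ ⋃ g : G, φ g '' C = univ := by
  refine ⟨closure (ZSpan.fundamentalDomain b),
    (ZSpan.fundamentalDomain_isBounded b).isCompact_closure, eq_univ_of_forall fun x => ?_⟩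
  obtain ⟨n, hn⟩ := hbt (ZSpan.floor b x).2
  refine mem_iUnion.2 ⟨(n.toMul : G), ZSpan.fract b x,
    subset_closure (ZSpan.fract_mem_fundamentalDomain b x), ?_⟩
  rw [hφ, ofMul_toMul, hn, ZSpan.fract_apply, sub_add_cancel]

end Translation

/-- A torsion-free group with a finite-index subgroup isomorphic to `ℤ^m` admits a free,
properly discontinuous, cocompact action by isometries on Euclidean `m`-space, given by
an injective homomorphism into the isometry group. -/
theorem exists_free_euclidean_action_of_torsionFree_virtually_zm (G : Type*) [Group G]
    (hG : ∀ g : G, g ≠ 1 → ¬IsOfFinOrder g) (m : ℕ)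
    (h : ∃ H : Subgroup G, H.FiniteIndex ∧ Nonempty (H ≃* Multiplicative (Fin m → ℤ))) :
    ∃ φ : G →* (EuclideanSpace ℝ (Fin m) ≃ᵢ EuclideanSpace ℝ (Fin m)),
      Function.Injective φ ∧
      (∀ (g : G) (x : EuclideanSpace ℝ (Fin m)), (φ g) x = x → g = 1) ∧
      (∀ K L : Set (EuclideanSpace ℝ (Fin m)), IsCompact K → IsCompact L →
        {g : G | ((φ g) '' K ∩ L).Nonempty}.Finite) ∧
      (∃ C : Set (EuclideanSpace ℝ (Fin m)), IsCompact C ∧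
        ⋃ g : G, (φ g) '' C = Set.univ) := by
  obtain ⟨H, _, ⟨e⟩⟩ := h
  obtain ⟨N, _, _, ⟨eN⟩⟩ := H.exists_normal_finiteIndex_mulEquiv e
  let ℓ := MulEquiv.toAdditiveLeft eN
  obtain ⟨φ, b, hφ⟩ :=
    exists_isometryEquiv_hom_translating_lattice ℓ (EuclideanSpace.basisFun (Fin m) ℝ).toBasis
  have ht := injective_latticeEmbedding ℓ b
  have hrange := range_latticeEmbedding ℓ b
  have hfree := φ.eq_one_of_apply_eq_self_of_finiteIndex hG
    (eq_one_of_apply_eq_self_of_translation ht hφ)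
  refine ⟨φ, (injective_iff_map_eq_one φ).2 fun g hg => hfree g 0 (DFunLike.congr_fun hg 0),
    hfree, fun _ _ => φ.finite_setOf_image_inter_nonempty_of_finiteIndex fun _ _ =>
      finite_setOf_mem_image_inter_nonempty_of_translation b ht hrange.subset hφ,
    exists_isCompact_iUnion_image_eq_univ_of_translation b hrange.superset hφ⟩
end

section
/- Let Γ be a group having a subgroup of index at most 2 that is isomorphic to the infinite cyclic group ℤ. Then Γ is isomorphic to one of: ℤ, ℤ × ℤ/2ℤ, or the infinite dihedral group ℤ/2 ∗ ℤ/2. -/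
/-!
Let `x` generate the index-two subgroup `H ≅ ℤ` and pick `t ∉ H`. As `H` is normal, conjugation
by `t` restricts to an automorphism of `H`, so `t x t⁻¹` is `x` or `x⁻¹`; moreover `t² = xⁿ ∈ H`.
If `t` inverts `x`, then `t` also inverts `t² = xⁿ`, which it commutes with, so `n = 0` and
`Γ` is infinite dihedral. If `t` commutes with `x`, write `n = 2m` or `n = 2m + 1`: the element
`t x⁻ᵐ` squares to `1`, giving `ℤ × ℤ/2`, or to `x`, in which case it generates `Γ ≅ ℤ`.
Each comparison map from a model group is surjective because its image contains `H` and an element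
outside `H`.
-/

open Subgroup

section

variable {G : Type*} [Group G]

lemma Subgroup.exists_zpowers_eq_of_mulEquiv_int {H : Subgroup G} (e : H ≃* Multiplicative ℤ) :
    ∃ x : G, zpowers x = H ∧ ¬IsOfFinOrder x := by
  set φ : Multiplicative ℤ →* G := H.subtype.comp e.symm.toMonoidHom
  have hφ : Function.Injective φ := H.subtype_injective.comp e.symm.injective
  refine ⟨φ (.ofAdd 1), ?_, ?_⟩
  · rw [← range_zpowersHom, MonoidHom.ext_mint (f := zpowersHom G _) (g := φ) (by simp),
      MonoidHom.range_comp, MonoidHom.range_eq_top.mpr e.symm.surjective,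
      ← MonoidHom.range_eq_map, range_subtype]
  · rw [← orderOf_eq_zero_iff, orderOf_injective φ hφ, orderOf_eq_zero_iff,
      ← injective_zpow_iff_not_isOfFinOrder]
    intro m n h
    simpa [← ofAdd_zsmul] using h

lemma conj_eq_self_or_inv_of_normal_zpowers {x : G} (hx : ¬IsOfFinOrder x)
    (hn : (zpowers x).Normal) (t : G) : t * x * t⁻¹ = x ∨ t * x * t⁻¹ = x⁻¹ := by
  have : zpowers x = zpowers (t * x * t⁻¹) := by
    rw [← normal_iff_map_conj_eq.mp hn t, MonoidHom.map_zpowers]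
    rfl
  exact ((zpowers_eq_zpowers_iff hx).mp this).imp Eq.symm Eq.symm

lemma Subgroup.eq_top_of_index_eq_two_of_le {H K : Subgroup G} (hH : H.index = 2) (hHK : H ≤ K)
    (hKH : ¬K ≤ H) : K = ⊤ := by
  obtain ⟨k, hkK, hkH⟩ := SetLike.not_le_iff_exists.mp hKH
  refine eq_top_iff.mpr fun g _ ↦ ?_
  by_cases hg : g ∈ H
  · exact hHK hg
  · have : k⁻¹ * g ∈ H := (mul_mem_iff_of_index_two hH).mpr (by simp [hkH, hg])
    simpa using K.mul_mem hkK (hHK this)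

lemma MonoidHom.surjective_of_zpowers_index_eq_two {A : Type*} [Group A] (f : A →* G) {x t : G}
    (hidx : (zpowers x).index = 2) (hxf : x ∈ f.range) (htf : t ∈ f.range)
    (ht : t ∉ zpowers x) : Function.Surjective f :=
  MonoidHom.range_eq_top.mp <|
    eq_top_of_index_eq_two_of_le hidx (zpowers_le.mpr hxf) fun h ↦ ht (h htf)

def zmodPowHom (n : ℕ) (s : G) (hs : s ^ n = 1) : Multiplicative (ZMod n) →* G :=
  AddMonoidHom.toMultiplicativeLeft
    (ZMod.lift n ⟨zmultiplesHom (Additive G) (.ofMul s), by simpa [← ofMul_pow]⟩)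

@[simp]
lemma zmodPowHom_ofAdd_intCast (n : ℕ) (s : G) (hs : s ^ n = 1) (k : ℤ) :
    zmodPowHom n s hs (.ofAdd k) = s ^ k := by
  simp [zmodPowHom, ZMod.lift_coe]

/-- `ZMod 0` is `ℤ` by definition, so `show ℤ from i` reads the index as an integer exponent. -/
def infiniteDihedralHom (x t : G) (ht : t ^ 2 = 1) (htx : t * x * t⁻¹ = x⁻¹) :
    DihedralGroup 0 →* G where
  toFun
    | .r i => x ^ (show ℤ from i)
    | .sr i => t * x ^ (show ℤ from i)
  map_one' := zpow_zero x
  map_mul' := by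
    have hswap (i : ℤ) : x ^ i * t = t * x ^ (-i) := by
      have := conj_zpow (a := t) (b := x) (i := -i)
      rw [htx, inv_zpow', neg_neg] at this
      rw [this]
      group
    have htt : t * t = 1 := by rw [← sq, ht]
    rintro ((i : ℤ) | (i : ℤ)) ((j : ℤ) | (j : ℤ))
    · exact zpow_add x i j
    · show t * x ^ (j - i) = x ^ i * (t * x ^ j)
      rw [← mul_assoc, hswap, mul_assoc, ← zpow_add, sub_eq_neg_add]
    · show t * x ^ (i + j) = t * x ^ i * x ^ j
      rw [mul_assoc, ← zpow_add]
    · show x ^ (j - i) = t * x ^ i * (t * x ^ j)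
      rw [mul_assoc, ← mul_assoc _ t, hswap, ← mul_assoc, ← mul_assoc, htt, one_mul, ← zpow_add,
        sub_eq_neg_add]

lemma infiniteDihedralHom_r (x t : G) (ht : t ^ 2 = 1) (htx : t * x * t⁻¹ = x⁻¹) (i : ℤ) :
    infiniteDihedralHom x t ht htx (.r i) = x ^ i := rfl

lemma infiniteDihedralHom_sr (x t : G) (ht : t ^ 2 = 1) (htx : t * x * t⁻¹ = x⁻¹) (i : ℤ) :
    infiniteDihedralHom x t ht htx (.sr i) = t * x ^ i := rfl

lemma nonempty_mulEquiv_int_of_sq_eq {x u : G} (hx : ¬IsOfFinOrder x)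
    (hidx : (zpowers x).index = 2) (hu : u ^ 2 = x) : Nonempty (G ≃* Multiplicative ℤ) := by
  have hu_notMem : u ∉ zpowers x := by
    rintro ⟨k, hk : x ^ k = u⟩
    have : x ^ (2 * k) = x ^ (1 : ℤ) := by rw [zpow_mul', zpow_ofNat, hk, hu, zpow_one]
    have := injective_zpow_iff_not_isOfFinOrder.mpr hx this
    omega
  have htop : zpowers u = ⊤ :=
    eq_top_of_index_eq_two_of_le hidx (zpowers_le.mpr (hu ▸ pow_mem (mem_zpowers u) 2))
      fun h ↦ hu_notMem (h (mem_zpowers u))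
  have : Infinite G := not_finite_iff_infinite.mp fun _ ↦ hx (isOfFinOrder_of_finite x)
  exact ⟨(intEquivOfZPowersEqTop u htop).symm⟩

lemma nonempty_mulEquiv_int_prod_zmod_two {x s : G} (hx : ¬IsOfFinOrder x)
    (hidx : (zpowers x).index = 2) (hs : s ^ 2 = 1) (hsx : Commute x s)
    (hs_notMem : s ∉ zpowers x) : Nonempty (G ≃* Multiplicative ℤ × Multiplicative (ZMod 2)) := by
  let f := (zpowersHom G x).noncommCoprod (zmodPowHom 2 s hs) fun a b ↦ by
    obtain ⟨k, hk⟩ := ZMod.intCast_surjective b.toAdd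
    rw [zpowersHom_apply, ← ofAdd_toAdd b, ← hk, zmodPowHom_ofAdd_intCast]
    exact hsx.zpow_zpow _ _
  have hf (a k : ℤ) : f (.ofAdd a, .ofAdd k) = x ^ a * s ^ k := by
    simp [f, MonoidHom.noncommCoprod_apply]
  refine ⟨(MulEquiv.ofBijective f ⟨(injective_iff_map_eq_one f).mpr ?_, ?_⟩).symm⟩
  · rintro ⟨a, b⟩ h
    obtain ⟨a, rfl⟩ := Multiplicative.ofAdd.surjective a
    obtain ⟨k, hk⟩ := ZMod.intCast_surjective b.toAdd
    obtain rfl : b = .ofAdd k := by simp [hk]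
    rw [hf] at h
    obtain ⟨j, rfl | rfl⟩ := Int.even_or_odd' k
    · rw [zpow_mul, zpow_ofNat, hs, one_zpow, mul_one, ← zpow_zero x] at h
      obtain rfl := injective_zpow_iff_not_isOfFinOrder.mpr hx h
      ext <;> simp [show (2 : ZMod 2) = 0 from rfl]
    · rw [zpow_add, zpow_mul, zpow_ofNat, hs, one_zpow, one_mul, zpow_one,
        mul_eq_one_iff_inv_eq] at h
      exact absurd (h ▸ inv_mem (zpow_mem (mem_zpowers x) a)) hs_notMem
  · refine f.surjective_of_zpowers_index_eq_two hidx ⟨(.ofAdd 1, 1), ?_⟩ ⟨(1, .ofAdd 1), ?_⟩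
      hs_notMem
    · simpa using hf 1 0
    · simpa using hf 0 1

lemma nonempty_mulEquiv_dihedralGroup_zero {x t : G} (hx : ¬IsOfFinOrder x)
    (hidx : (zpowers x).index = 2) (ht : t ^ 2 = 1) (htx : t * x * t⁻¹ = x⁻¹)
    (ht_notMem : t ∉ zpowers x) : Nonempty (G ≃* DihedralGroup 0) := by
  set f := infiniteDihedralHom x t ht htx
  refine ⟨(MulEquiv.ofBijective f ⟨(injective_iff_map_eq_one f).mpr ?_, ?_⟩).symm⟩
  · rintro ((i : ℤ) | (i : ℤ)) h
    · rw [infiniteDihedralHom_r, ← zpow_zero x] at h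
      rw [injective_zpow_iff_not_isOfFinOrder.mpr hx h]
      rfl
    · rw [infiniteDihedralHom_sr, mul_eq_one_iff_eq_inv] at h
      exact absurd (h ▸ inv_mem (zpow_mem (mem_zpowers x) i)) ht_notMem
  · refine f.surjective_of_zpowers_index_eq_two hidx ⟨.r 1, zpow_one x⟩ ⟨.sr (0 : ℤ), ?_⟩
      ht_notMem
    rw [infiniteDihedralHom_sr, zpow_zero, mul_one]

lemma sq_eq_one_of_conj_eq_inv {x t : G} (hx : ¬IsOfFinOrder x)
    (hidx : (zpowers x).index = 2) (htx : t * x * t⁻¹ = x⁻¹) : t ^ 2 = 1 := by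
  obtain ⟨n, hn⟩ := mem_zpowers_iff.mp (sq_mem_of_index_two hidx t)
  have : x ^ (-n) = x ^ n :=
    calc x ^ (-n) = (t * x * t⁻¹) ^ n := by rw [htx, inv_zpow']
      _ = t * x ^ n * t⁻¹ := conj_zpow
      _ = x ^ n := by rw [hn]; group
  obtain rfl : n = 0 := by linarith [injective_zpow_iff_not_isOfFinOrder.mpr hx this]
  rw [← hn, zpow_zero]

lemma nonempty_mulEquiv_int_or_int_prod_zmod_two {x t : G} (hx : ¬IsOfFinOrder x)
    (hidx : (zpowers x).index = 2) (htx : Commute x t) (ht_notMem : t ∉ zpowers x) :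
    Nonempty (G ≃* Multiplicative ℤ) ∨
      Nonempty (G ≃* Multiplicative ℤ × Multiplicative (ZMod 2)) := by
  obtain ⟨n, hn⟩ := mem_zpowers_iff.mp (sq_mem_of_index_two hidx t)
  have hsq (m : ℤ) : (t * x ^ (-m)) ^ 2 = x ^ (n - 2 * m) := by
    rw [((htx.zpow_left (-m)).symm).mul_pow, ← hn, ← zpow_natCast, ← zpow_mul, ← zpow_add]
    ring_nf
  have hnotMem (m : ℤ) : t * x ^ (-m) ∉ zpowers x := fun h ↦
    ht_notMem (by simpa using mul_mem h (zpow_mem (mem_zpowers x) m))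
  obtain ⟨m, rfl | rfl⟩ := Int.even_or_odd' n
  · exact .inr (nonempty_mulEquiv_int_prod_zmod_two hx hidx (by rw [hsq, sub_self, zpow_zero])
      (htx.mul_right ((Commute.refl x).zpow_right (-m))) (hnotMem m))
  · exact .inl (nonempty_mulEquiv_int_of_sq_eq hx hidx (by rw [hsq, add_sub_cancel_left, zpow_one]))

end

/-- A group with a subgroup of index at most 2 isomorphic to `ℤ` is isomorphic to `ℤ`,
to `ℤ × ℤ/2ℤ`, or to the infinite dihedral group. -/
theorem classification_virtually_Z_index_two (Γ : Type*) [Group Γ]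
    (h : ∃ H : Subgroup Γ, (H.index = 1 ∨ H.index = 2) ∧
      Nonempty (H ≃* Multiplicative ℤ)) :
    Nonempty (Γ ≃* Multiplicative ℤ) ∨
    Nonempty (Γ ≃* Multiplicative ℤ × Multiplicative (ZMod 2)) ∨
    Nonempty (Γ ≃* DihedralGroup 0) := by
  obtain ⟨H, hidx | hidx, ⟨e⟩⟩ := h
  · exact .inl ⟨((MulEquiv.subgroupCongr (index_eq_one.mp hidx)).trans topEquiv).symm.trans e⟩
  obtain ⟨x, rfl, hx⟩ := H.exists_zpowers_eq_of_mulEquiv_int e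
  obtain ⟨t, ht, -⟩ := index_eq_two_iff_exists_notMem_and.mp hidx
  rcases conj_eq_self_or_inv_of_normal_zpowers hx (normal_of_index_eq_two hidx) t with htx | htx
  · have hcomm : Commute x t := (mul_inv_eq_iff_eq_mul.mp htx).symm
    exact (nonempty_mulEquiv_int_or_int_prod_zmod_two hx hidx hcomm ht).elim .inl (.inr ∘ .inl)
  · exact .inr <| .inr <|
      nonempty_mulEquiv_dihedralGroup_zero hx hidx (sq_eq_one_of_conj_eq_inv hx hidx htx) htx ht
end

section
/- Let C ⊆ D ⊆ E be sets of natural numbers. If C is recursive in D and D is recursive in E, then C is recursive in E. -/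
/-- Two disjoint sets of naturals are recursively separable if recursively enumerable
sets separate them. -/
def RecursivelySeparable (X Y : Set ℕ) : Prop :=
  ∃ X' Y' : Set ℕ, REPred (· ∈ X') ∧ REPred (· ∈ Y') ∧
    X ⊆ X' ∧ Y ∩ X' = ∅ ∧ Y ⊆ Y' ∧ X ∩ Y' = ∅

/-- `C` is recursive in `D` if `C` and `D \ C` are recursively separable. -/
def RecursiveIn' (C D : Set ℕ) : Prop := RecursivelySeparable C (D \ C)

/-!
`E \ C` splits as `(D \ C) ∪ (E \ D)`. `C` is separated from `D \ C` by hypothesis, and from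
`E \ D` because `C ⊆ D` and `D` is separated from `E \ D`. Separations of `X` from `Y₁` and from
`Y₂` combine into one from `Y₁ ∪ Y₂` by intersecting the r.e. supersets of `X` and uniting those
of `Y₁` and `Y₂`, r.e. sets being closed under both operations.
-/

section REPred

variable {α : Type*} [Primcodable α] {p q : α → Prop}

theorem REPred.and (hp : REPred p) (hq : REPred q) : REPred fun a => p a ∧ q a := by
  have h : Partrec fun a => (Part.assert (p a) fun _ => Part.some ()).bind
      fun _ => Part.assert (q a) fun _ => Part.some () :=
    hp.bind (hq.comp Computable.fst).to₂
  exact h.dom_re.of_eq fun a => by simp [Part.assert]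

-- Dovetailing: `Partrec.merge'` halts as soon as either semi-decision procedure does.
theorem REPred.or (hp : REPred p) (hq : REPred q) : REPred fun a => p a ∨ q a := by
  obtain ⟨k, hk, H⟩ := Partrec.merge' hp hq
  refine hk.dom_re.of_eq fun a => ?_
  rw [(H a).2]
  simp [Part.assert]

end REPred

namespace RecursivelySeparable

theorem mono {X Y X₀ Y₀ : Set ℕ} (h : RecursivelySeparable X₀ Y₀) (hX : X ⊆ X₀)
    (hY : Y ⊆ Y₀) : RecursivelySeparable X Y := by
  obtain ⟨X', Y', hX', hY', hXX', hYX', hYY', hXY'⟩ := h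
  exact ⟨X', Y', hX', hY', hX.trans hXX',
    Set.subset_eq_empty (Set.inter_subset_inter_left _ hY) hYX', hY.trans hYY',
    Set.subset_eq_empty (Set.inter_subset_inter_left _ hX) hXY'⟩

theorem union_right {X Y₁ Y₂ : Set ℕ} (h₁ : RecursivelySeparable X Y₁)
    (h₂ : RecursivelySeparable X Y₂) : RecursivelySeparable X (Y₁ ∪ Y₂) := by
  obtain ⟨X₁', Y₁', hX₁', hY₁', hXX₁', hYX₁', hYY₁', hXY₁'⟩ := h₁
  obtain ⟨X₂', Y₂', hX₂', hY₂', hXX₂', hYX₂', hYY₂', hXY₂'⟩ := h₂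
  refine ⟨X₁' ∩ X₂', Y₁' ∪ Y₂', hX₁'.and hX₂', hY₁'.or hY₂', Set.subset_inter hXX₁' hXX₂', ?_,
    Set.union_subset_union hYY₁' hYY₂', ?_⟩
  · rw [Set.union_inter_distrib_right, Set.union_empty_iff]
    exact ⟨Set.subset_eq_empty (Set.inter_subset_inter_right _ Set.inter_subset_left) hYX₁',
      Set.subset_eq_empty (Set.inter_subset_inter_right _ Set.inter_subset_right) hYX₂'⟩
  · rw [Set.inter_union_distrib_left, hXY₁', hXY₂', Set.union_empty]

end RecursivelySeparable

/-- If `C ⊆ D ⊆ E`, `C` is recursive in `D`, and `D` is recursive in `E`, then `C` is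
recursive in `E`. -/
theorem recursiveIn_trans (C D E : Set ℕ) (hCD : C ⊆ D) (hDE : D ⊆ E)
    (h1 : RecursiveIn' C D) (h2 : RecursiveIn' D E) : RecursiveIn' C E := by
  have hC : RecursivelySeparable C (E \ D) := h2.mono hCD subset_rfl
  unfold RecursiveIn'
  rw [← Set.sdiff_union_sdiff_cancel hDE hCD]
  exact hC.union_right h1
end
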